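/- Let n ≥ 1, 0 ≤ j ≤ n−1, and 0 ≤ i ≤ n. Then there exist l with 0 ≤ l ≤ n−1 and m with 0 ≤ m ≤ n such that E_j^{(n-1)} ∘ E_i^{(n)} = E_l^{(n-1)} ∘ (id × σ_m) as maps Fin 2 × Fin (n+2) → Fin 2 × Fin n, where σ_m : Fin (n+2) → Fin (n+1) is the codegeneracy hitting m twice and E_j^{(k)} : Fin 2 × Fin (k+2) → Fin 2 × Fin (k+1) sends (m,r) to (m,r) if r ≤ j and to (1, r−1) otherwise. -/
import Mathlib


/-- `E_j^{(k)} : Δ¹ ⊗ Δ^{k+1} → Δ¹ ⊗ Δ^k` on vertices. -/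
def Emap (k j : ℕ) (hj : j ≤ k) (p : Fin 2 × Fin (k + 2)) : Fin 2 × Fin (k + 1) :=
  if h : (p.2 : ℕ) ≤ j then (p.1, ⟨(p.2 : ℕ), by omega⟩)
  else (1, ⟨(p.2 : ℕ) - 1, by omega⟩)

/-- The codegeneracy `σ_i : [k+1] → [k]`, the monotone surjection hitting `i` twice. -/
def codegen (k i : ℕ) (hi : i ≤ k) (r : Fin (k + 2)) : Fin (k + 1) :=
  if h : (r : ℕ) ≤ i then ⟨(r : ℕ), by omega⟩ else ⟨(r : ℕ) - 1, by omega⟩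

lemma Emap_fst (k j : ℕ) (hj : j ≤ k) (p : Fin 2 × Fin (k + 2)) :
    (Emap k j hj p).1 = if (p.2 : ℕ) ≤ j then p.1 else 1 := by
  unfold Emap; split_ifs <;> rfl

lemma Emap_snd (k j : ℕ) (hj : j ≤ k) (p : Fin 2 × Fin (k + 2)) :
    ((Emap k j hj p).2 : ℕ) = if (p.2 : ℕ) ≤ j then (p.2 : ℕ) else (p.2 : ℕ) - 1 := by
  unfold Emap; split_ifs <;> rfl

lemma codegen_val (k i : ℕ) (hi : i ≤ k) (r : Fin (k + 2)) :
    (codegen k i hi r : ℕ) = if (r : ℕ) ≤ i then (r : ℕ) else (r : ℕ) - 1 := by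
  unfold codegen; split_ifs <;> rfl

/-- For `n = m' + 1 ≥ 1`, `0 ≤ j ≤ n - 1` and `0 ≤ i ≤ n`, there exist `l ≤ n - 1` and
`t ≤ n` with `E_j^{(n-1)} ∘ E_i^{(n)} = E_l^{(n-1)} ∘ (id × σ_t)`: an extension of an
extension is degenerate. -/
theorem Emap_Emap_degenerate (m' j i : ℕ) (hj : j ≤ m') (hi : i ≤ m' + 1) :
    ∃ (l : ℕ) (hl : l ≤ m') (t : ℕ) (ht : t ≤ m' + 1),
      ∀ p : Fin 2 × Fin (m' + 3),
        Emap m' j hj (Emap (m' + 1) i hi p) =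
          Emap m' l hl (p.1, codegen (m' + 1) t ht p.2) := by
  refine ⟨min i j, by omega, max (j + 1) i, by omega, fun p => ?_⟩
  rw [Prod.ext_iff]
  have h2 : ((p.1, codegen (m' + 1) (max (j + 1) i) (by omega) p.2).2 : ℕ)
      = codegen (m' + 1) (max (j + 1) i) (by omega) p.2 := rfl
  constructor
  · rw [Emap_fst, Emap_fst, Emap_fst, Emap_snd, h2, codegen_val]
    split_ifs <;> first | rfl | (exfalso; omega)
  · rw [Fin.ext_iff, Emap_snd, Emap_snd, Emap_snd, h2, codegen_val]
    split_ifs <;> omega
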